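/- arXiv:1402.2688 — 2 statements merged into one kernel-verified Lean document; each statement's English description precedes it below -/
import Mathlib

section
/- For every real λ > 1 and every real L with 0 < L and √(λ²−1)·L < 2π, one has λ·L − 4·arctan( (λ/√(λ²−1)) · tan( (√(λ²−1)/4)·L ) ) ≥ L − 4·arctan( L/4 ). (This is the real inequality showing that the lower bound of the main theorem in the case λ > k implies the λ-independent lower bound stated for λ ≥ k, with the normalization k = 1.) -/
/-!
Write `s = √(λ² - 1)`, so `λ = √(1 + s²)`, and regard the left-hand side as a function `F` of `s`
for fixed `L`. With `t = sL/4 ∈ (0, π/2)` a direct computation gives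
`F'(s) = 4 (tan t - t) / (s² λ (1 + a²))`, where `a` is the argument of `arctan`, so `F` is
increasing on `(0, 2π/L)`. As `s → 0⁺`, `tan (sL/4) / s → L/4`, hence
`F(s) → L - 4 arctan (L/4)`, which is therefore a lower bound for `F`.
-/

open Real Filter Topology Set

/-- The left-hand side of the theorem in terms of `s = √(λ² - 1)`. -/
noncomputable def luneBound (L s : ℝ) : ℝ :=
  √(1 + s ^ 2) * L - 4 * arctan (√(1 + s ^ 2) / s * tan (s / 4 * L))

theorem hasDerivAt_luneBound {L s : ℝ} (hs : s ≠ 0) (hcos : cos (s / 4 * L) ≠ 0) :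
    HasDerivAt (luneBound L)
      (4 * (tan (s / 4 * L) - s / 4 * L) /
        (s ^ 2 * √(1 + s ^ 2) * (1 + (√(1 + s ^ 2) / s * tan (s / 4 * L)) ^ 2))) s := by
  have hpos : 0 < 1 + s ^ 2 := by positivity
  have hsqrt : HasDerivAt (fun x => √(1 + x ^ 2)) (s / √(1 + s ^ 2)) s := by
    refine (((hasDerivAt_pow 2 s).const_add 1).sqrt hpos.ne').congr_deriv ?_
    field_simp
    ring
  have htan : HasDerivAt (fun x => tan (x / 4 * L)) ((1 + tan (s / 4 * L) ^ 2) * (L / 4)) s := by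
    refine ((hasDerivAt_tan hcos).comp s
      (((hasDerivAt_id' s).div_const 4).mul_const L)).congr_deriv ?_
    rw [← inv_one_add_tan_sq hcos]
    field_simp
  have hinner := ((hsqrt.div (hasDerivAt_id' s) hs).mul htan).arctan
  refine ((hsqrt.mul_const L).sub (hinner.const_mul 4)).congr_deriv ?_
  have hsq : √(1 + s ^ 2) ^ 2 = 1 + s ^ 2 := sq_sqrt hpos.le
  simp only [Pi.div_apply, Pi.mul_apply]
  field_simp
  linear_combination (4 * tan (s * L / 4) - s * L) * hsq

theorem monotoneOn_luneBound {L : ℝ} (hL : 0 < L) :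
    MonotoneOn (luneBound L) (Ioo 0 (2 * π / L)) := by
  have hangle : ∀ s ∈ Ioo 0 (2 * π / L), s / 4 * L ∈ Ioo 0 (π / 2) := by
    rintro s ⟨hs, hsL⟩
    rw [lt_div_iff₀ hL] at hsL
    constructor <;> nlinarith
  have hderiv : ∀ s ∈ Ioo 0 (2 * π / L), HasDerivAt (luneBound L)
      (4 * (tan (s / 4 * L) - s / 4 * L) /
        (s ^ 2 * √(1 + s ^ 2) * (1 + (√(1 + s ^ 2) / s * tan (s / 4 * L)) ^ 2))) s :=
    fun s hs => hasDerivAt_luneBound hs.1.ne'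
      (cos_pos_of_mem_Ioo ⟨by linarith [(hangle s hs).1, pi_pos], (hangle s hs).2⟩).ne'
  refine monotoneOn_of_deriv_nonneg (convex_Ioo _ _)
    (fun s hs => (hderiv s hs).continuousAt.continuousWithinAt) (fun s hs => ?_) fun s hs => ?_ <;>
    rw [interior_Ioo] at hs
  · exact (hderiv s hs).differentiableAt.differentiableWithinAt
  · have htan := le_tan (hangle s hs).1.le (hangle s hs).2
    rw [(hderiv s hs).deriv]
    exact div_nonneg (by linarith) (by positivity)

theorem tendsto_tan_mul_div_self (c : ℝ) :
    Tendsto (fun x => tan (x * c) / x) (𝓝[≠] 0) (𝓝 c) := by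
  have h := ((hasDerivAt_tan (x := 0 * c) (by simp)).comp 0
    ((hasDerivAt_id' 0).mul_const c)).tendsto_slope_zero
  simpa [div_eq_inv_mul] using h

theorem tendsto_luneBound (L : ℝ) :
    Tendsto (luneBound L) (𝓝[>] 0) (𝓝 (L - 4 * arctan (L / 4))) := by
  have hsqrt : Tendsto (fun s : ℝ => √(1 + s ^ 2)) (𝓝[>] 0) (𝓝 1) := by
    have : Continuous fun s : ℝ => √(1 + s ^ 2) := by fun_prop
    simpa using (this.tendsto 0).mono_left nhdsWithin_le_nhds
  have htan : Tendsto (fun s => tan (s / 4 * L) / s) (𝓝[>] 0) (𝓝 (L / 4)) := by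
    refine ((tendsto_tan_mul_div_self (L / 4)).mono_left (nhdsGT_le_nhdsNE 0)).congr fun s => ?_
    ring_nf
  have hinner := ((continuous_arctan.tendsto _).comp (hsqrt.mul htan)).const_mul 4
  have := (hsqrt.mul_const L).sub hinner
  simp only [one_mul] at this
  refine this.congr fun s => ?_
  simp only [luneBound, Function.comp_apply, div_mul_eq_mul_div, mul_div_assoc]

theorem sub_four_mul_arctan_le_luneBound {L s : ℝ} (hL : 0 < L) (hs : s ∈ Ioo 0 (2 * π / L)) :
    L - 4 * arctan (L / 4) ≤ luneBound L s := by
  refine le_of_tendsto (tendsto_luneBound L) ?_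
  filter_upwards [Ioo_mem_nhdsGT hs.1] with x hx
  exact monotoneOn_luneBound hL ⟨hx.1, hx.2.trans hs.2⟩ hs hx.2.le

/-- The lune lower bound for `λ > 1` dominates the `λ`-independent bound
`L - 4·arctan(L/4)` (normalization `k = 1`). -/
theorem lune_bound_ge_weak_bound (lam L : ℝ) (hlam : 1 < lam) (hL : 0 < L)
    (harg : Real.sqrt (lam ^ 2 - 1) * L < 2 * π) :
    lam * L - 4 * Real.arctan ((lam / Real.sqrt (lam ^ 2 - 1)) *
        Real.tan ((Real.sqrt (lam ^ 2 - 1) / 4) * L))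
      ≥ L - 4 * Real.arctan (L / 4) := by
  have hs : 0 < √(lam ^ 2 - 1) := sqrt_pos.2 (by nlinarith)
  have hlam_eq : lam = √(1 + √(lam ^ 2 - 1) ^ 2) := by
    rw [sq_sqrt (by nlinarith), add_sub_cancel, sqrt_sq (by linarith)]
  generalize √(lam ^ 2 - 1) = s at hs harg hlam_eq ⊢
  subst hlam_eq
  exact sub_four_mul_arctan_le_luneBound hL ⟨hs, (lt_div_iff₀ hL).2 harg⟩
end

section
/- Let μ₀, μ₁ ∈ ℝ, let u be a bounded measurable function on an interval (t₁, t₂), and let x₁, x₂, p₁, p₂ be absolutely continuous real functions on (t₁, t₂) with x₁(t)² + x₂(t)² < 1 for all t, satisfying almost everywhere the phase system ẋ₁ = x₂, ẋ₂ = u·((1 − x₁² − x₂²)/(1 − x₁²))^(3/2) − x₁, and the adjoint equation ṗ₂ = −∂H/∂x₂ (with H as below, the partial derivative evaluated along the trajectory). If the switching function H₁(t) = μ₁·√(1 − x₁² − x₂²)/(1 − x₁²) + p₂·((1 − x₁² − x₂²)/(1 − x₁²))^(3/2) vanishes identically on (t₁, t₂), then on (t₁, t₂): p₂ = −μ₁·√(1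 − x₁²)/(1 − x₁² − x₂²) and p₁ = −x₂·( μ₁·x₁·√(1 − x₁²) + μ₀·√(1 − x₁² − x₂²) ) / ( (1 − x₁²)·(1 − x₁² − x₂²) ). -/
/-!
On a singular arc the identity `H₁ = 0` is an algebraic equation for `p₂`, which expresses `p₂`
as a function of the phase point. Differentiating that expression along the phase flow and
comparing with the adjoint equation `ṗ₂ = -∂H/∂x₂` gives a linear equation for `p₁` from which
the control drops out, so `p₁` is a function of the phase point as well. This holds almost
everywhere, and continuity of both sides extends it to the whole arc.
-/

open Real MeasureTheory

/-- Pontryagin's function for the optimal control problem to which the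
isoperimetric problem for `λ`-convex curves on the hyperbolic plane of
curvature `-1` is reduced. -/
noncomputable def pontryaginH (μ₀ μ₁ x₁ x₂ p₁ p₂ u : ℝ) : ℝ :=
  p₁ * x₂ + p₂ * (u * ((1 - x₁ ^ 2 - x₂ ^ 2) / (1 - x₁ ^ 2)) ^ ((3 : ℝ) / 2) - x₁)
    + μ₁ * u * Real.sqrt (1 - x₁ ^ 2 - x₂ ^ 2) / (1 - x₁ ^ 2)
    - μ₀ * (Real.sqrt (1 - x₁ ^ 2 - x₂ ^ 2) / (1 - x₁ ^ 2) - 1)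

open Filter Topology

/-- The switching function `H₁ = ∂H/∂u`. -/
noncomputable def switchingFunction (μ₁ x₁ x₂ p₂ : ℝ) : ℝ :=
  μ₁ * √(1 - x₁ ^ 2 - x₂ ^ 2) / (1 - x₁ ^ 2)
    + p₂ * ((1 - x₁ ^ 2 - x₂ ^ 2) / (1 - x₁ ^ 2)) ^ ((3 : ℝ) / 2)

noncomputable def singularP₂ (μ₁ x₁ x₂ : ℝ) : ℝ :=
  -μ₁ * √(1 - x₁ ^ 2) / (1 - x₁ ^ 2 - x₂ ^ 2)

noncomputable def singularP₁ (μ₀ μ₁ x₁ x₂ : ℝ) : ℝ :=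
  -x₂ * (μ₁ * x₁ * √(1 - x₁ ^ 2) + μ₀ * √(1 - x₁ ^ 2 - x₂ ^ 2))
    / ((1 - x₁ ^ 2) * (1 - x₁ ^ 2 - x₂ ^ 2))

theorem rpow_three_halves_eq_mul_sqrt {b : ℝ} (hb : 0 ≤ b) : b ^ ((3 : ℝ) / 2) = b * √b := by
  rw [sqrt_eq_rpow, ← rpow_one_add' hb (by norm_num)]
  norm_num

theorem rpow_three_halves_div {a Q : ℝ} (ha : 0 ≤ a) (hQ : 0 ≤ Q) :
    (Q / a) ^ ((3 : ℝ) / 2) = Q * √Q / (a * √a) := by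
  rw [rpow_three_halves_eq_mul_sqrt (div_nonneg hQ ha), sqrt_div hQ, div_mul_div_comm]

section disk

variable {x₁ x₂ : ℝ}

theorem one_sub_sq_pos_of_mem_disk (h : x₁ ^ 2 + x₂ ^ 2 < 1) : 0 < 1 - x₁ ^ 2 := by
  nlinarith [sq_nonneg x₂]

theorem one_sub_sq_sub_sq_pos_of_mem_disk (h : x₁ ^ 2 + x₂ ^ 2 < 1) : 0 < 1 - x₁ ^ 2 - x₂ ^ 2 := by
  linarith

theorem eq_singularP₂_of_switchingFunction_eq_zero {μ₁ p₂ : ℝ} (h : x₁ ^ 2 + x₂ ^ 2 < 1)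
    (hsw : switchingFunction μ₁ x₁ x₂ p₂ = 0) : p₂ = singularP₂ μ₁ x₁ x₂ := by
  have ha := one_sub_sq_pos_of_mem_disk h
  have hQ := one_sub_sq_sub_sq_pos_of_mem_disk h
  rw [switchingFunction, rpow_three_halves_div ha.le hQ.le] at hsw
  have hsQ := sqrt_pos.2 hQ
  have key : μ₁ * √(1 - x₁ ^ 2) + p₂ * (1 - x₁ ^ 2 - x₂ ^ 2) = 0 := by
    field_simp at hsw
    have := (mul_eq_zero.1 (hsw.trans (mul_zero _))).resolve_left hsQ.ne'
    linarith
  rw [singularP₂, eq_div_iff hQ.ne']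
  linarith

theorem hasDerivAt_pontryaginH_x₂ (μ₀ μ₁ p₁ p₂ u : ℝ) (h : x₁ ^ 2 + x₂ ^ 2 < 1) :
    HasDerivAt (fun y => pontryaginH μ₀ μ₁ x₁ y p₁ p₂ u)
      (p₁ - x₂ / (1 - x₁ ^ 2) * (3 * p₂ * u * √((1 - x₁ ^ 2 - x₂ ^ 2) / (1 - x₁ ^ 2))
        + (μ₁ * u - μ₀) / √(1 - x₁ ^ 2 - x₂ ^ 2))) x₂ := by
  have ha := one_sub_sq_pos_of_mem_disk h
  have hQ := one_sub_sq_sub_sq_pos_of_mem_disk h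
  have hQ' : HasDerivAt (fun y : ℝ => 1 - x₁ ^ 2 - y ^ 2) (-(2 * x₂)) x₂ := by
    simpa using (hasDerivAt_pow 2 x₂).const_sub (1 - x₁ ^ 2)
  have hrpow := (hQ'.div_const (1 - x₁ ^ 2)).rpow_const (p := (3 : ℝ) / 2) (Or.inr (by norm_num))
  have hsqrt := hQ'.sqrt hQ.ne'
  have hH : HasDerivAt (fun y => pontryaginH μ₀ μ₁ x₁ y p₁ p₂ u) _ x₂ :=
    ((((hasDerivAt_id x₂).const_mul p₁).add
      (((hrpow.const_mul u).sub_const x₁).const_mul p₂)).add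
      ((hsqrt.const_mul (μ₁ * u)).div_const (1 - x₁ ^ 2))).sub
      (((hsqrt.div_const (1 - x₁ ^ 2)).sub_const 1).const_mul μ₀)
  refine hH.congr_deriv ?_
  rw [show (3 : ℝ) / 2 - 1 = 1 / 2 by norm_num, ← sqrt_eq_rpow]
  field_simp
  ring

end disk

section trajectory

variable {x₁ x₂ : ℝ → ℝ} {t : ℝ}

theorem hasDerivAt_singularP₂_of_phase_system (μ₁ u : ℝ) (h : x₁ t ^ 2 + x₂ t ^ 2 < 1)
    (h₁ : HasDerivAt x₁ (x₂ t) t)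
    (h₂ : HasDerivAt x₂
      (u * ((1 - x₁ t ^ 2 - x₂ t ^ 2) / (1 - x₁ t ^ 2)) ^ ((3 : ℝ) / 2) - x₁ t) t) :
    HasDerivAt (fun τ => singularP₂ μ₁ (x₁ τ) (x₂ τ))
      (μ₁ * x₂ t / (1 - x₁ t ^ 2 - x₂ t ^ 2) * (x₁ t / √(1 - x₁ t ^ 2)
        - 2 * u * √(1 - x₁ t ^ 2 - x₂ t ^ 2) / (1 - x₁ t ^ 2))) t := by
  have ha := one_sub_sq_pos_of_mem_disk h
  have hQ := one_sub_sq_sub_sq_pos_of_mem_disk h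
  have ha' : HasDerivAt (fun τ => 1 - x₁ τ ^ 2) (-(2 * x₁ t * x₂ t)) t := by
    simpa [mul_comm, mul_assoc] using (h₁.pow 2).const_sub 1
  have hQ' : HasDerivAt (fun τ => 1 - x₁ τ ^ 2 - x₂ τ ^ 2)
      (-(2 * x₂ t * u * ((1 - x₁ t ^ 2 - x₂ t ^ 2) / (1 - x₁ t ^ 2)) ^ ((3 : ℝ) / 2))) t := by
    refine (ha'.fun_sub (h₂.fun_pow 2)).congr_deriv ?_
    push_cast
    ring
  refine (((ha'.sqrt ha.ne').const_mul (-μ₁)).div hQ' hQ.ne').congr_deriv ?_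
  rw [rpow_three_halves_div ha.le hQ.le]
  field_simp

theorem eq_singularP₁_of_adjoint (μ₀ μ₁ u p₁ : ℝ) {p₂ : ℝ → ℝ} (h : x₁ t ^ 2 + x₂ t ^ 2 < 1)
    (h₁ : HasDerivAt x₁ (x₂ t) t)
    (h₂ : HasDerivAt x₂
      (u * ((1 - x₁ t ^ 2 - x₂ t ^ 2) / (1 - x₁ t ^ 2)) ^ ((3 : ℝ) / 2) - x₁ t) t)
    (hp₂ : p₂ =ᶠ[𝓝 t] fun τ => singularP₂ μ₁ (x₁ τ) (x₂ τ))
    (hadj : HasDerivAt p₂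
      (-(deriv (fun y => pontryaginH μ₀ μ₁ (x₁ t) y p₁ (p₂ t) u) (x₂ t))) t) :
    p₁ = singularP₁ μ₀ μ₁ (x₁ t) (x₂ t) := by
  have hderiv := hadj.unique
    ((hasDerivAt_singularP₂_of_phase_system μ₁ u h h₁ h₂).congr_of_eventuallyEq hp₂)
  rw [(hasDerivAt_pontryaginH_x₂ μ₀ μ₁ p₁ (p₂ t) u h).deriv, hp₂.eq_of_nhds] at hderiv
  have ha := one_sub_sq_pos_of_mem_disk h
  have hQ := one_sub_sq_sub_sq_pos_of_mem_disk h
  have hsa := sqrt_pos.2 ha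
  have hsQ := sqrt_pos.2 hQ
  rw [singularP₂, sqrt_div hQ.le] at hderiv
  rw [singularP₁]
  field_simp at hderiv ⊢
  rw [sq_sqrt hQ.le] at hderiv
  refine mul_left_cancel₀ (mul_pos hsa hsQ).ne' ?_
  -- the terms in the control `u` cancel
  linear_combination -hderiv + x₂ t * x₁ t * μ₁ * √(1 - x₁ t ^ 2 - x₂ t ^ 2) * sq_sqrt ha.le
    + x₂ t * √(1 - x₁ t ^ 2) * (μ₀ + 2 * μ₁ * u) * sq_sqrt hQ.le

theorem ContinuousOn.singularP₁ (μ₀ μ₁ : ℝ) {s : Set ℝ} (hx₁ : ContinuousOn x₁ s)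
    (hx₂ : ContinuousOn x₂ s) (h : ∀ t ∈ s, x₁ t ^ 2 + x₂ t ^ 2 < 1) :
    ContinuousOn (fun t => singularP₁ μ₀ μ₁ (x₁ t) (x₂ t)) s := by
  refine ContinuousOn.div (by fun_prop) (by fun_prop) fun t ht => ?_
  exact (mul_pos (one_sub_sq_pos_of_mem_disk (h t ht))
    (one_sub_sq_sub_sq_pos_of_mem_disk (h t ht))).ne'

end trajectory

theorem adjoint_on_singular_arc_general (μ₀ μ₁ t₁ t₂ : ℝ)
    (u x₁ x₂ p₁ p₂ : ℝ → ℝ)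
    (hx₁ : ContinuousOn x₁ (Set.Ioo t₁ t₂)) (hx₂ : ContinuousOn x₂ (Set.Ioo t₁ t₂))
    (hp₁ : ContinuousOn p₁ (Set.Ioo t₁ t₂))
    (hball : ∀ t ∈ Set.Ioo t₁ t₂, x₁ t ^ 2 + x₂ t ^ 2 < 1)
    (hphase₁ : ∀ᵐ t ∂(volume : Measure ℝ), t ∈ Set.Ioo t₁ t₂ →
      HasDerivAt x₁ (x₂ t) t)
    (hphase₂ : ∀ᵐ t ∂(volume : Measure ℝ), t ∈ Set.Ioo t₁ t₂ →
      HasDerivAt x₂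
        (u t * ((1 - x₁ t ^ 2 - x₂ t ^ 2) / (1 - x₁ t ^ 2)) ^ ((3 : ℝ) / 2) - x₁ t) t)
    (hadj₂ : ∀ᵐ t ∂(volume : Measure ℝ), t ∈ Set.Ioo t₁ t₂ →
      HasDerivAt p₂
        (-(deriv (fun y => pontryaginH μ₀ μ₁ (x₁ t) y (p₁ t) (p₂ t) (u t)) (x₂ t))) t)
    (hsing : ∀ t ∈ Set.Ioo t₁ t₂,
      μ₁ * Real.sqrt (1 - x₁ t ^ 2 - x₂ t ^ 2) / (1 - x₁ t ^ 2)
        + p₂ t * ((1 - x₁ t ^ 2 - x₂ t ^ 2) / (1 - x₁ t ^ 2)) ^ ((3 : ℝ) / 2) = 0) :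
    ∀ t ∈ Set.Ioo t₁ t₂,
      p₂ t = -μ₁ * Real.sqrt (1 - x₁ t ^ 2) / (1 - x₁ t ^ 2 - x₂ t ^ 2) ∧
      p₁ t = -x₂ t *
          (μ₁ * x₁ t * Real.sqrt (1 - x₁ t ^ 2) + μ₀ * Real.sqrt (1 - x₁ t ^ 2 - x₂ t ^ 2))
          / ((1 - x₁ t ^ 2) * (1 - x₁ t ^ 2 - x₂ t ^ 2)) := by
  have hp₂ : ∀ t ∈ Set.Ioo t₁ t₂, p₂ t = singularP₂ μ₁ (x₁ t) (x₂ t) := fun t ht =>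
    eq_singularP₂_of_switchingFunction_eq_zero (hball t ht) (hsing t ht)
  have hp₁ae : p₁ =ᵐ[volume.restrict (Set.Ioo t₁ t₂)]
      fun t => singularP₁ μ₀ μ₁ (x₁ t) (x₂ t) := by
    rw [EventuallyEq, ae_restrict_iff' measurableSet_Ioo]
    filter_upwards [hphase₁, hphase₂, hadj₂] with t h₁ h₂ hadj ht
    exact eq_singularP₁_of_adjoint μ₀ μ₁ (u t) (p₁ t) (hball t ht) (h₁ ht) (h₂ ht)
      (eventually_of_mem (isOpen_Ioo.mem_nhds ht) hp₂) (hadj ht)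
  have hp₁eq := Measure.eqOn_open_of_ae_eq hp₁ae isOpen_Ioo hp₁
    (hx₁.singularP₁ μ₀ μ₁ hx₂ hball)
  exact fun t ht => ⟨hp₂ t ht, hp₁eq ht⟩

/-- Along a singular arc (where the switching function `H₁` vanishes
identically), the adjoint variables `p₂` and `p₁` are given by explicit
formulas in the phase variables. -/
theorem adjoint_on_singular_arc (μ₀ μ₁ t₁ t₂ : ℝ) (ht : t₁ < t₂)
    (u x₁ x₂ p₁ p₂ : ℝ → ℝ)
    (hu_meas : Measurable u) (hu_bdd : ∃ C : ℝ, ∀ t ∈ Set.Ioo t₁ t₂, |u t| ≤ C)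
    (hx₁ : ContinuousOn x₁ (Set.Ioo t₁ t₂)) (hx₂ : ContinuousOn x₂ (Set.Ioo t₁ t₂))
    (hp₁ : ContinuousOn p₁ (Set.Ioo t₁ t₂)) (hp₂ : ContinuousOn p₂ (Set.Ioo t₁ t₂))
    (hball : ∀ t ∈ Set.Ioo t₁ t₂, x₁ t ^ 2 + x₂ t ^ 2 < 1)
    (hphase₁ : ∀ᵐ t ∂(volume : Measure ℝ), t ∈ Set.Ioo t₁ t₂ →
      HasDerivAt x₁ (x₂ t) t)
    (hphase₂ : ∀ᵐ t ∂(volume : Measure ℝ), t ∈ Set.Ioo t₁ t₂ →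
      HasDerivAt x₂
        (u t * ((1 - x₁ t ^ 2 - x₂ t ^ 2) / (1 - x₁ t ^ 2)) ^ ((3 : ℝ) / 2) - x₁ t) t)
    (hadj₂ : ∀ᵐ t ∂(volume : Measure ℝ), t ∈ Set.Ioo t₁ t₂ →
      HasDerivAt p₂
        (-(deriv (fun y => pontryaginH μ₀ μ₁ (x₁ t) y (p₁ t) (p₂ t) (u t)) (x₂ t))) t)
    (hsing : ∀ t ∈ Set.Ioo t₁ t₂,
      μ₁ * Real.sqrt (1 - x₁ t ^ 2 - x₂ t ^ 2) / (1 - x₁ t ^ 2)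
        + p₂ t * ((1 - x₁ t ^ 2 - x₂ t ^ 2) / (1 - x₁ t ^ 2)) ^ ((3 : ℝ) / 2) = 0) :
    ∀ t ∈ Set.Ioo t₁ t₂,
      p₂ t = -μ₁ * Real.sqrt (1 - x₁ t ^ 2) / (1 - x₁ t ^ 2 - x₂ t ^ 2) ∧
      p₁ t = -x₂ t *
          (μ₁ * x₁ t * Real.sqrt (1 - x₁ t ^ 2) + μ₀ * Real.sqrt (1 - x₁ t ^ 2 - x₂ t ^ 2))
          / ((1 - x₁ t ^ 2) * (1 - x₁ t ^ 2 - x₂ t ^ 2)) :=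
  adjoint_on_singular_arc_general μ₀ μ₁ t₁ t₂ u x₁ x₂ p₁ p₂ hx₁ hx₂ hp₁ hball hphase₁ hphase₂ hadj₂
    hsing
end
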